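/- Let A and B be finite types and let φ₀, φ₁ : A × B → ℂ be unit vectors. If there is NO unitary matrix S ∈ Matrix.unitaryGroup A ℂ with (S ⊗ I).mulVec φ₀ = φ₁, then the fidelity of the reduced states satisfies F(ptrA φ₀, ptrA φ₁) ≠ 1. (A perfectly binding static quantum bit commitment is therefore not perfectly concealing.) -/

import Mathlib

open scoped ComplexOrder
open Matrix

noncomputable section

/-- Partial trace over `A` of the outer product `|ψ⟩⟨ψ|`:
`(ptrA ψ) j q = ∑ i, ψ (i, j) * conj (ψ (i, q))`. -/
def ptrA {A B : Type*} [Fintype A] (ψ : A × B → ℂ) : Matrix B B ℂ :=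
  fun j q => ∑ i : A, ψ (i, j) * (starRingEnd ℂ) (ψ (i, q))

/-- The Kronecker product `S ⊗ I` with the identity on `B`, as a matrix on `A × B`. -/
def kronId {A B : Type*} [DecidableEq B] (S : Matrix A A ℂ) : Matrix (A × B) (A × B) ℂ :=
  Matrix.kroneckerMap (· * ·) S (1 : Matrix B B ℂ)

/-- `ptrA ψ` is a Gram matrix, hence positive semidefinite. -/
lemma ptrA_posSemidef {A B : Type*} [Fintype A] [Fintype B] (ψ : A × B → ℂ) :
    (ptrA ψ).PosSemidef := by
  set V : Matrix A B ℂ := Matrix.of fun i j => (starRingEnd ℂ) (ψ (i, j)) with hV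
  have h := Matrix.posSemidef_conjTranspose_mul_self V
  have heq : ptrA ψ = Vᴴ * V := by
    ext j q
    simp [Matrix.mul_apply, Matrix.conjTranspose_apply, ptrA, hV, mul_comm]
  rw [heq]; exact h

namespace Matrix.PosSemidef

/-- The positive semidefinite square root of a positive semidefinite matrix
(the definition of the older Mathlib, where it has since been removed). -/
def sqrt {n 𝕜 : Type*} [Fintype n] [RCLike 𝕜] [DecidableEq n] {A : Matrix n n 𝕜}
    (hA : A.PosSemidef) : Matrix n n 𝕜 :=
  hA.1.eigenvectorUnitary.1 * diagonal ((↑) ∘ (√·) ∘ hA.1.eigenvalues) *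
  (star hA.1.eigenvectorUnitary : Matrix n n 𝕜)

lemma posSemidef_sqrt {n 𝕜 : Type*} [Fintype n] [RCLike 𝕜] [DecidableEq n] {A : Matrix n n 𝕜}
    (hA : A.PosSemidef) : hA.sqrt.PosSemidef := by
  have hd : (diagonal ((↑) ∘ (√·) ∘ hA.1.eigenvalues) : Matrix n n 𝕜).PosSemidef := by
    rw [posSemidef_diagonal_iff]
    intro i
    exact RCLike.ofReal_nonneg.mpr (Real.sqrt_nonneg _)
  exact hd.mul_mul_conjTranspose_same _

end Matrix.PosSemidef

lemma sqrt_mul_mul_sqrt_posSemidef {B : Type*} [Fintype B] [DecidableEq B]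
    {ρ σ : Matrix B B ℂ} (hρ : ρ.PosSemidef) (hσ : σ.PosSemidef) :
    (hρ.sqrt * σ * hρ.sqrt).PosSemidef := by
  have h := hσ.mul_mul_conjTranspose_same hρ.sqrt
  rwa [hρ.posSemidef_sqrt.isHermitian.eq] at h

/-- The fidelity `F(ρ, σ) = tr √(√ρ * σ * √ρ)` of two positive semidefinite matrices. -/
def fidelity {B : Type*} [Fintype B] [DecidableEq B] {ρ σ : Matrix B B ℂ}
    (hρ : ρ.PosSemidef) (hσ : σ.PosSemidef) : ℝ :=
  ((sqrt_mul_mul_sqrt_posSemidef hρ hσ).sqrt.trace).re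


/-!
If `F(ρ, σ) = 1` for states `ρ, σ`, write `√σ √ρ = W P` with `W` unitary and
`P = √(√ρ σ √ρ)` (polar decomposition). Then `1 = tr P = ⟨√σ W, √ρ⟩` in the Hilbert–Schmidt
inner product, between two matrices of Hilbert–Schmidt norm `1`; equality in Cauchy–Schwarz gives
`√σ W = √ρ`, hence `ρ = σ`. Viewing `φ : A × B → ℂ` as an `A`-by-`B` matrix `M`, the reduced state
`ptrA φ` is the Gram matrix `Mᵀ (Mᵀ)ᴴ`, and two matrices with the same Gram matrix differ by a
unitary. So equal reduced states of `φ₀` and `φ₁` yield a local unitary `S` with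
`(S ⊗ I) φ₀ = φ₁`.
-/

theorem LinearMap.exists_linearIsometry_comp_eq_of_norm_eq {𝕜 V W : Type*} [RCLike 𝕜]
    [NormedAddCommGroup V] [InnerProductSpace 𝕜 V] [FiniteDimensional 𝕜 V]
    [AddCommGroup W] [Module 𝕜 W] (f g : W →ₗ[𝕜] V) (h : ∀ x, ‖f x‖ = ‖g x‖) :
    ∃ L : V →ₗᵢ[𝕜] V, ∀ x, L (f x) = g x := by
  have hker : LinearMap.ker f ≤ LinearMap.ker g := fun x hx => by
    rw [LinearMap.mem_ker, ← norm_eq_zero, ← h, hx, norm_zero]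
  let g' : LinearMap.range f →ₗ[𝕜] V :=
    (LinearMap.ker f).liftQ g hker ∘ₗ f.quotKerEquivRange.symm.toLinearMap
  have hg' : ∀ x, g' ⟨f x, f.mem_range_self x⟩ = g x := fun x => by
    simp [g', f.quotKerEquivRange_symm_apply_image]
  let gI : LinearMap.range f →ₗᵢ[𝕜] V := ⟨g', by
    rintro ⟨_, x, rfl⟩
    rw [hg', ← h]
    rfl⟩
  exact ⟨gI.extend, fun x => (gI.extend_apply ⟨f x, f.mem_range_self x⟩).trans (hg' x)⟩

namespace Matrix

variable {𝕜 m n : Type*} [RCLike 𝕜] [Fintype m] [DecidableEq m] [Fintype n] [DecidableEq n]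

theorem PosSemidef.sqrt_mul_self {A : Matrix n n 𝕜} (hA : A.PosSemidef) :
    hA.sqrt * hA.sqrt = A := by
  have hsqrt : hA.sqrt = Unitary.conjStarAlgAut 𝕜 _ hA.1.eigenvectorUnitary
      (diagonal ((↑) ∘ (√·) ∘ hA.1.eigenvalues)) := rfl
  conv_rhs => rw [hA.1.spectral_theorem]
  rw [hsqrt, ← map_mul, diagonal_mul_diagonal]
  congr 2
  funext i
  simp [← RCLike.ofReal_mul, Real.mul_self_sqrt (hA.eigenvalues_nonneg i)]

theorem inner_toEuclideanLin_toEuclideanLin (A : Matrix m n 𝕜) (x y : EuclideanSpace 𝕜 n) :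
    inner 𝕜 (toEuclideanLin A x) (toEuclideanLin A y) =
      inner 𝕜 x (toEuclideanLin (Aᴴ * A) y) := by
  rw [toLpLin_mul_same, LinearMap.comp_apply, toEuclideanLin_conjTranspose_eq_adjoint,
    LinearMap.adjoint_inner_right]

theorem exists_mem_unitaryGroup_mul_eq_of_conjTranspose_mul_self_eq {A B : Matrix m n 𝕜}
    (h : Aᴴ * A = Bᴴ * B) : ∃ U ∈ unitaryGroup m 𝕜, U * A = B := by
  have hnorm : ∀ x, ‖toEuclideanLin A x‖ = ‖toEuclideanLin B x‖ := fun x => by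
    rw [@norm_eq_sqrt_re_inner 𝕜, @norm_eq_sqrt_re_inner 𝕜, inner_toEuclideanLin_toEuclideanLin,
      inner_toEuclideanLin_toEuclideanLin, h]
  obtain ⟨L, hL⟩ := (toEuclideanLin A).exists_linearIsometry_comp_eq_of_norm_eq _ hnorm
  refine ⟨toEuclideanLin.symm L.toLinearMap, ?_, ?_⟩
  · rw [mem_unitaryGroup_iff', star_eq_conjTranspose]
    apply toEuclideanLin.injective
    rw [toLpLin_mul_same, toEuclideanLin_conjTranspose_eq_adjoint, LinearEquiv.apply_symm_apply,
      L.adjoint_comp_self', toLpLin_one]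
  · apply toEuclideanLin.injective
    ext x : 1
    rw [toLpLin_mul_same, LinearMap.comp_apply, LinearEquiv.apply_symm_apply,
      LinearIsometry.coe_toLinearMap, hL]

theorem exists_mem_unitaryGroup_mul_eq_of_mul_conjTranspose_eq {A B : Matrix m n 𝕜}
    (h : A * Aᴴ = B * Bᴴ) : ∃ U ∈ unitaryGroup n 𝕜, A * U = B := by
  obtain ⟨U, hU, hUA⟩ := exists_mem_unitaryGroup_mul_eq_of_conjTranspose_mul_self_eq
    (A := Aᴴ) (B := Bᴴ) (by rwa [conjTranspose_conjTranspose, conjTranspose_conjTranspose])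
  refine ⟨star U, Unitary.star_mem hU, ?_⟩
  rw [← conjTranspose_conjTranspose B, ← hUA, conjTranspose_mul, conjTranspose_conjTranspose,
    star_eq_conjTranspose]

omit [DecidableEq m] [DecidableEq n] in
/-- Equality case of the Cauchy–Schwarz inequality for the Hilbert–Schmidt inner product. -/
theorem eq_of_trace_conjTranspose_mul_eq_one {X Y : Matrix m n 𝕜}
    (hX : (Xᴴ * X).trace = 1) (hY : (Yᴴ * Y).trace = 1) (hXY : (Xᴴ * Y).trace = 1) : X = Y := by
  have hYX : (Yᴴ * X).trace = 1 := by
    simpa [← trace_conjTranspose] using congrArg star hXY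
  rw [← sub_eq_zero, ← trace_conjTranspose_mul_self_eq_zero_iff, conjTranspose_sub, Matrix.sub_mul,
    Matrix.mul_sub, Matrix.mul_sub, trace_sub, trace_sub, trace_sub, hX, hY, hXY, hYX]
  norm_num

end Matrix

theorem eq_of_fidelity_eq_one {B : Type*} [Fintype B] [DecidableEq B] {ρ σ : Matrix B B ℂ}
    (hρ : ρ.PosSemidef) (hσ : σ.PosSemidef) (hρ₁ : ρ.trace = 1) (hσ₁ : σ.trace = 1)
    (hF : fidelity hρ hσ = 1) : ρ = σ := by
  have hR : hρ.sqrtᴴ = hρ.sqrt := hρ.posSemidef_sqrt.isHermitian.eq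
  have hS : hσ.sqrtᴴ = hσ.sqrt := hσ.posSemidef_sqrt.isHermitian.eq
  have hM := sqrt_mul_mul_sqrt_posSemidef hρ hσ
  have hP : hM.sqrt.trace = 1 :=
    Complex.ext hF (by simpa using (Complex.nonneg_iff.mp hM.posSemidef_sqrt.trace_nonneg).2.symm)
  obtain ⟨W, hW, hWP⟩ : ∃ W ∈ unitaryGroup B ℂ, W * hM.sqrt = hσ.sqrt * hρ.sqrt := by
    refine exists_mem_unitaryGroup_mul_eq_of_conjTranspose_mul_self_eq ?_
    rw [hM.posSemidef_sqrt.isHermitian.eq, hM.sqrt_mul_self, conjTranspose_mul, hR, hS,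
      ← mul_assoc, mul_assoc hρ.sqrt hσ.sqrt, hσ.sqrt_mul_self]
  have hWW : W * Wᴴ = 1 := mem_unitaryGroup_iff.mp hW
  have hSW : hσ.sqrt * W = hρ.sqrt := by
    refine eq_of_trace_conjTranspose_mul_eq_one ?_ (by rw [hR, hρ.sqrt_mul_self, hρ₁]) ?_
    · rw [conjTranspose_mul, hS, mul_assoc, ← mul_assoc hσ.sqrt, hσ.sqrt_mul_self, trace_mul_comm,
        mul_assoc, hWW, mul_one, hσ₁]
    · rw [conjTranspose_mul, hS, mul_assoc, ← hWP, ← mul_assoc, ← star_eq_conjTranspose,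
        mem_unitaryGroup_iff'.mp hW, one_mul, hP]
  calc ρ = hρ.sqrt * hρ.sqrtᴴ := by rw [hR, hρ.sqrt_mul_self]
    _ = hσ.sqrt * (W * Wᴴ) * hσ.sqrt := by rw [← hSW, conjTranspose_mul, hS]; simp only [mul_assoc]
    _ = σ := by rw [hWW, mul_one, hσ.sqrt_mul_self]

section PartialTrace

variable {A B : Type*} [Fintype A]

theorem ptrA_eq_transpose_mul_conjTranspose (ψ : A × B → ℂ) :
    ptrA ψ = (of (Function.curry ψ))ᵀ * (of (Function.curry ψ))ᵀᴴ := by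
  ext j q
  simp [ptrA, mul_apply]

theorem trace_ptrA [Fintype B] (ψ : A × B → ℂ) :
    (ptrA ψ).trace = ∑ k : A × B, (starRingEnd ℂ) (ψ k) * ψ k := by
  simp only [trace, diag_apply, ptrA, Fintype.sum_prod_type]
  rw [Finset.sum_comm]
  simp only [mul_comm]

theorem kronId_mulVec_apply [Fintype B] [DecidableEq B] (S : Matrix A A ℂ) (φ : A × B → ℂ)
    (i : A) (j : B) : (kronId S).mulVec φ (i, j) = (S * of (Function.curry φ)) i j := by
  simp [kronId, mulVec, dotProduct, mul_apply, Fintype.sum_prod_type, one_apply]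

end PartialTrace

/-- A perfectly binding static QBC is not perfectly concealing: if no local unitary on `A`
maps `φ₀` to `φ₁`, then the fidelity of the reduced states is not `1`. -/
theorem binding_implies_not_concealing_static
    {A B : Type*} [Fintype A] [Fintype B] [DecidableEq A] [DecidableEq B]
    (φ₀ φ₁ : A × B → ℂ)
    (h₀ : ∑ k : A × B, (starRingEnd ℂ) (φ₀ k) * φ₀ k = 1)
    (h₁ : ∑ k : A × B, (starRingEnd ℂ) (φ₁ k) * φ₁ k = 1)
    (hbinding : ¬ ∃ S ∈ Matrix.unitaryGroup A ℂ, (kronId S).mulVec φ₀ = φ₁) :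
    fidelity (ptrA_posSemidef φ₀) (ptrA_posSemidef φ₁) ≠ 1 := by
  intro hF
  have hρσ : ptrA φ₀ = ptrA φ₁ :=
    eq_of_fidelity_eq_one _ _ (by rw [trace_ptrA, h₀]) (by rw [trace_ptrA, h₁]) hF
  rw [ptrA_eq_transpose_mul_conjTranspose, ptrA_eq_transpose_mul_conjTranspose] at hρσ
  obtain ⟨U, hU, hU₀₁⟩ := exists_mem_unitaryGroup_mul_eq_of_mul_conjTranspose_eq hρσ
  refine hbinding ⟨Uᵀ, transpose_mem_unitaryGroup_iff.mpr hU, ?_⟩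
  ext ⟨i, j⟩
  rw [kronId_mulVec_apply, ← transpose_transpose (of (Function.curry φ₀)), ← transpose_mul, hU₀₁]
  rfl
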